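/- arXiv:1902.05902 — 6 statements merged into one kernel-verified Lean document; each statement's English description precedes it below -/
import Mathlib

section
/- Let P : Set ℕ → Prop be any property of subsets of ℕ (viewed as a property of first-order theories, identifying a theory with the set of Gödel codes of its sentences), and let C := {n : ℕ | P (W_n)}. Suppose F : ℕ →. ℕ is a partial computable function such that C ⊆ dom(F) and for every n ∈ C, F(n) ∉ W_n. Then the set of values of F does not have property P, i.e. ¬ P ({m : ℕ | ∃ n, m ∈ F n}). -/
/-!
The range of `F` is computably enumerable, hence equal to `W e` for some index `e`. If the range
had property `P`, then `e ∈ C`, so `F e` is defined and, by the hypothesis on `F`, lies outside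
`W e`; but `F e` belongs to the range of `F`, which is `W e`.
-/

/-- `W e` is the domain of the `e`-th partial computable function: the `e`-th
computably enumerable set. -/
def W (e : ℕ) : Set ℕ := {x : ℕ | ((Denumerable.ofNat Nat.Partrec.Code e).eval x).Dom}

open Nat.Partrec (Code)

theorem REPred.exists_nat {α : Type*} [Primcodable α] {p : α × ℕ → Prop}
    (hp : ComputablePred p) : REPred fun a => ∃ n, p (a, n) := by
  obtain ⟨_, hdec⟩ := hp
  have hsearch : Partrec fun a => Nat.rfind fun n => (Part.some (decide (p (a, n))) : Part Bool) :=
    Partrec.rfind hdec.partrec.to₂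
  exact hsearch.dom_re.of_eq fun a => Nat.rfind_dom.trans (by simp)

theorem Partrec.range_re {F : ℕ →. ℕ} (hF : Partrec F) : REPred fun m => ∃ n, m ∈ F n := by
  obtain ⟨c, rfl⟩ := Code.exists_code.1 (Partrec.nat_iff.1 hF)
  -- `x.2` codes a pair (step bound, input) witnessing that `x.1` is a value of `c.eval`.
  have hwitness : PrimrecPred fun x : ℕ × ℕ => Code.evaln x.2.unpair.1 c x.2.unpair.2 = some x.1 :=
    Primrec.eq.comp
      (Code.primrec_evaln.comp
        (((Primrec.fst.comp (Primrec.unpair.comp Primrec.snd)).pair (Primrec.const c)).pair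
          (Primrec.snd.comp (Primrec.unpair.comp Primrec.snd))))
      (Primrec.option_some.comp Primrec.fst)
  refine (REPred.exists_nat hwitness.computablePred).of_eq fun m => ?_
  constructor
  · rintro ⟨k, hk⟩
    exact ⟨_, Code.evaln_sound hk⟩
  · rintro ⟨n, hn⟩
    obtain ⟨k, hk⟩ := Code.evaln_complete.1 hn
    exact ⟨Nat.pair k n, by simpa using hk⟩

theorem REPred.exists_W_eq {p : ℕ → Prop} (hp : REPred p) : ∃ e, W e = {n | p n} := by
  obtain ⟨c, hc⟩ := Code.exists_code.1 (Partrec.nat_iff.1 (hp.map (Computable.const 0).to₂))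
  refine ⟨Encodable.encode c, Set.ext fun n => ?_⟩
  simp only [W, Denumerable.ofNat_encode, hc, Set.mem_ofPred_eq, Part.map_Dom]
  exact ⟨fun h => h.1, fun h => ⟨h, trivial⟩⟩

/-- If `P` is any property of c.e. sets (theories identified with sets of Gödel codes),
`C = {n | P (W n)}`, and `F` is a partial computable function defined on all of `C`
with `F n ∉ W n` for every `n ∈ C`, then the set of values of `F` does not have
property `P`. -/
theorem stmt_0 (P : Set ℕ → Prop) (C : Set ℕ) (hC : C = {n : ℕ | P (W n)})
    (F : ℕ →. ℕ) (hF : Partrec F)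
    (hdom : C ⊆ {n : ℕ | (F n).Dom})
    (hdiag : ∀ n ∈ C, ∀ m ∈ F n, m ∉ W n) :
    ¬ P {m : ℕ | ∃ n, m ∈ F n} := by
  intro hP
  obtain ⟨e, he⟩ := hF.range_re.exists_W_eq
  have heC : e ∈ C := by rw [hC, Set.mem_ofPred_eq, he]; exact hP
  obtain ⟨m, hm⟩ := Part.dom_iff_mem.1 (hdom heC)
  exact hdiag e heC m hm (he ▸ ⟨e, hm⟩)
end

section
/- Let S := {n : ℕ | Th(M_n) is sound}. Suppose F : ℕ →. ℕ is a partial computable function such that S ⊆ dom(F) and for every n ∈ S, F(n) ∉ W_n (i.e. F(n) is not the code of any sentence of Th(M_n)). Then the theory {φ : ring sentence | encode φ is a value of F} is not sound, i.e. it contains a sentence that is false in ℤ. -/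
/-!
The values of a partial computable function form a computably enumerable set, so
`{m | ∃ n, m ∈ F n} = W e` for some index `e`, and the theory read off the values of `F` is
`Th(M_e)`. If that theory were sound, `e` would lie in `S`, so `F e` would be defined, and its
value, being a value of `F`, would lie in `W e`: this contradicts `F e ∉ W e`.
-/

open FirstOrder Language

/-- Sentences of the language of rings are countable. -/
instance : Countable (Σ n, Language.ring.BoundedFormula Empty n) :=
  Language.BoundedFormula.listEncode_sigma_injective.countable

instance : Countable Language.ring.Sentence :=
  Function.Injective.countable
    (f := fun φ : Language.ring.Sentence =>
      (⟨0, φ⟩ : Σ n, Language.ring.BoundedFormula Empty n))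
    (fun _ _ h => by simpa using h)

/-- Gödel numbering of ring sentences. -/
noncomputable instance : Encodable Language.ring.Sentence :=
  Encodable.ofCountable _

/-- `ThM e` is the theory (set of ring sentences) produced by the `e`-th Turing machine. -/
noncomputable def ThM (e : ℕ) : Language.ring.Theory :=
  {φ : Language.ring.Sentence | Encodable.encode φ ∈ W e}

attribute [local instance] FirstOrder.Ring.compatibleRingOfRing

open Nat.Partrec.Code

theorem exists_W_eq_dom {g : ℕ →. ℕ} (hg : Partrec g) : ∃ e, W e = {x | (g x).Dom} := by
  obtain ⟨c, rfl⟩ := exists_code.1 (Partrec.nat_iff.1 hg)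
  exact ⟨Encodable.encode c, by simp [W]⟩

/-- Dovetailing: search for a pair `(k, n)` such that `F n` halts with value `m` in `k` steps. -/
theorem Partrec.exists_dom_eq_range {F : ℕ →. ℕ} (hF : Partrec F) :
    ∃ g : ℕ →. ℕ, Partrec g ∧ {m | (g m).Dom} = {m | ∃ n, m ∈ F n} := by
  obtain ⟨c, rfl⟩ := exists_code.1 (Partrec.nat_iff.1 hF)
  let halts (m s : ℕ) : Bool := decide (evaln s.unpair.1 c s.unpair.2 = some m)
  have halts_primrec : Primrec₂ halts :=
    PrimrecPred.decide <| Primrec.eq.comp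
      (primrec_evaln.comp
        (((Primrec.fst.comp (Primrec.unpair.comp Primrec.snd)).pair (Primrec.const c)).pair
          (Primrec.snd.comp (Primrec.unpair.comp Primrec.snd))))
      (Primrec.option_some.comp Primrec.fst)
  refine ⟨fun m => Nat.rfind fun s => Part.some (halts m s),
    Partrec.rfind halts_primrec.to_comp.partrec₂, Set.ext fun m => ?_⟩
  simp only [Set.mem_ofPred_eq, evaln_complete]
  constructor
  · intro hdom
    have hhalts := Nat.rfind_spec (Part.get_mem hdom)
    simp only [halts, Part.mem_some_iff] at hhalts
    exact ⟨_, _, of_decide_eq_true hhalts.symm⟩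
  · rintro ⟨n, k, hk⟩
    obtain ⟨s, hs, -⟩ := Nat.rfind_min' (p := halts m) (m := Nat.pair k n)
      (by simpa [halts] using hk)
    exact Part.dom_iff_mem.2 ⟨s, hs⟩

theorem exists_ThM_eq_range {F : ℕ →. ℕ} (hF : Partrec F) :
    ∃ e, ThM e = {φ : Language.ring.Sentence | ∃ n, Encodable.encode φ ∈ F n} ∧
      W e = {m | ∃ n, m ∈ F n} := by
  obtain ⟨g, hg, hdom⟩ := hF.exists_dom_eq_range
  obtain ⟨e, he⟩ := exists_W_eq_dom hg
  refine ⟨e, ?_, he.trans hdom⟩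
  simp [ThM, he.trans hdom]

/-- If `S = {n | Th(M n) is sound}` (every sentence of `Th(M n)` is true in `ℤ`) and `F`
is a partial computable function defined on all of `S` with `F n ∉ W n` for every
`n ∈ S`, then the theory consisting of the sentences whose Gödel codes are values of
`F` is not sound: it contains a sentence that is false in `ℤ`. -/
theorem stmt_2 (S : Set ℕ)
    (hS : S = {n : ℕ | ∀ φ : Language.ring.Sentence, Encodable.encode φ ∈ W n → ℤ ⊨ φ})
    (F : ℕ →. ℕ) (hF : Partrec F)
    (hdom : S ⊆ {n : ℕ | (F n).Dom})
    (hdiag : ∀ n ∈ S, ∀ m ∈ F n, m ∉ W n) :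
    ∃ φ ∈ {φ : Language.ring.Sentence | ∃ n, (Encodable.encode φ : ℕ) ∈ F n},
      ¬ (ℤ ⊨ φ) := by
  obtain ⟨e, hThM, hW⟩ := exists_ThM_eq_range hF
  by_contra! hsound
  have he : e ∈ S := hS ▸ fun φ hφ => hsound φ (hThM ▸ hφ)
  obtain ⟨m, hm⟩ := Part.dom_iff_mem.1 (hdom he)
  exact hdiag e he m hm (hW ▸ ⟨e, hm⟩)
end

section
/- The set C := {n : ℕ | the theory Th(M_n) is consistent}, i.e. {n : ℕ | the set of ring sentences {φ | encode φ ∈ W_n} is satisfiable}, is not computable (it is not a ComputablePred). -/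
open FirstOrder Language

/-! A computable map sends a code `c` to a machine enumerating the single sentence `⊥` if `c`
halts on input `0`, and nothing otherwise. The theory of that machine is `{⊥}` or `∅`, so it is
consistent exactly when `c` does not halt: the complement of the halting problem many-one
reduces to `C`, which therefore cannot be computable. -/

namespace FirstOrder.Language.Theory

variable {L : Language} {T : L.Theory}

theorem isSatisfiable_iff_bot_notMem_of_subset (hT : T ⊆ {⊥}) :
    T.IsSatisfiable ↔ (⊥ : L.Sentence) ∉ T := by
  refine ⟨fun ⟨M⟩ hbot => Sentence.not_realize_bot (M := M) (M.is_model.realize_of_mem _ hbot),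
    fun hbot => ?_⟩
  have hempty : T = ∅ := Set.eq_empty_of_forall_notMem fun φ hφ => hbot (hT hφ ▸ hφ)
  exact hempty ▸ isSatisfiable_empty L

end FirstOrder.Language.Theory

open Nat.Partrec (Code)

theorem Nat.Partrec.Code.exists_computable_eval_eq {α : Type*} [Primcodable α]
    {g : α → ℕ →. ℕ} (hg : Partrec₂ g) :
    ∃ f : α → Code, Computable f ∧ ∀ a, (f a).eval = g a := by
  obtain ⟨cg, hcg⟩ := exists_code.1 hg
  refine ⟨fun a => cg.curry (Encodable.encode a),
    (primrec₂_curry.comp (_root_.Primrec.const cg) Primrec.encode).to_comp, fun a => ?_⟩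
  funext x
  simp [hcg, Part.map_id']

theorem exists_computable_W_eq {α : Type*} [Primcodable α] {g : α → ℕ →. ℕ} (hg : Partrec₂ g) :
    ∃ f : α → ℕ, Computable f ∧ ∀ a, W (f a) = {x | (g a x).Dom} := by
  obtain ⟨f, hf, hfg⟩ := Nat.Partrec.Code.exists_computable_eval_eq hg
  refine ⟨fun a => Encodable.encode (f a), Computable.encode.comp hf, fun a => ?_⟩
  simp [W, hfg]

theorem exists_computable_W_eq_of_halts (k n : ℕ) :
    ∃ f : Code → ℕ, Computable f ∧ ∀ c, W (f c) = {x | x = k ∧ (c.eval n).Dom} := by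
  have hg : Partrec₂ fun (c : Code) (x : ℕ) => if x = k then c.eval n else Part.none :=
    (Partrec.cond (Primrec.eq.comp Primrec.snd (Primrec.const k)).decide.to_comp
      (Nat.Partrec.Code.eval_part.comp Computable.fst (Computable.const n))
      Partrec.none).of_eq fun p => by by_cases hp : p.2 = k <;> simp [hp]
  obtain ⟨f, hf, hW⟩ := exists_computable_W_eq hg
  refine ⟨f, hf, fun c => ?_⟩
  ext x
  by_cases hx : x = k <;> simp [hW, hx]

theorem isSatisfiable_ThM_iff {e : ℕ} {P : Prop}
    (he : W e = {x | x = Encodable.encode (⊥ : Language.ring.Sentence) ∧ P}) :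
    (ThM e).IsSatisfiable ↔ ¬P := by
  have hThM : ThM e = {φ | φ = ⊥ ∧ P} := by
    ext φ
    simp [ThM, he]
  rw [Theory.isSatisfiable_iff_bot_notMem_of_subset (hThM ▸ fun φ hφ => hφ.1), hThM]
  simp

/-- The set `C = {n | Th(M n) is consistent}` is not computable. -/
theorem stmt_3 :
    ¬ ComputablePred (fun n : ℕ => (ThM n).IsSatisfiable) := by
  intro h
  obtain ⟨f, hf, hW⟩ :=
    exists_computable_W_eq_of_halts (Encodable.encode (⊥ : Language.ring.Sentence)) 0
  have hred : (fun c : Code => ¬(c.eval 0).Dom) ≤₀ fun n => (ThM n).IsSatisfiable :=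
    ⟨f, hf, fun c => (isSatisfiable_ThM_iff (hW c)).symm⟩
  exact ComputablePred.halting_problem 0 <|
    (ComputablePred.computable_of_manyOneReducible hred h).not.of_eq fun _ => not_not
end

section
/- The set S := {n : ℕ | the theory Th(M_n) is sound}, i.e. {n : ℕ | every ring sentence φ with encode φ ∈ W_n is true in ℤ}, is not computable (it is not a ComputablePred). -/
open FirstOrder Language

attribute [local instance] FirstOrder.Ring.compatibleRingOfRing

/-- A ring sentence that is false in `ℤ`: `0 = 1`. -/
noncomputable def falseSent : Language.ring.Sentence :=
  FirstOrder.Language.Term.equal (0 : Language.ring.Term Empty) 1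

attribute [local instance] FirstOrder.Ring.compatibleRingOfRing in
lemma falseSent_not_true : ¬ (ℤ ⊨ falseSent) := by
  simp [falseSent, Language.Sentence.Realize, Language.Formula.Realize,
    Language.Term.equal]

lemma computablePred_comp {α β : Type} [Primcodable α] [Primcodable β]
    {p : β → Prop} (hp : ComputablePred p) {f : α → β} (hf : Computable f) :
    ComputablePred fun a => p (f a) := by
  rw [ComputablePred.computable_iff] at hp ⊢
  obtain ⟨g, hg, hpg⟩ := hp
  exact ⟨fun a => g (f a), hg.comp hf, by funext a; rw [hpg]⟩

/-- The set `S = {n | Th(M n) is sound}` (every sentence of `Th(M n)` is true in `ℤ`)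
is not computable. -/
theorem stmt_4 :
    ¬ ComputablePred (fun n : ℕ =>
      ∀ φ : Language.ring.Sentence, Encodable.encode φ ∈ W n → ℤ ⊨ φ) := by
  intro hC
  set C : Set (ℕ →. ℕ) :=
    {F | ∀ φ : Language.ring.Sentence, (F (Encodable.encode φ)).Dom → ℤ ⊨ φ} with hCdef
  have h2 : ComputablePred fun c : Nat.Partrec.Code => c.eval ∈ C := by
    have := computablePred_comp hC (Computable.encode (α := Nat.Partrec.Code))
    refine this.of_eq fun c => ?_
    simp [hCdef, W, Set.mem_setOf_eq, Denumerable.ofNat_encode]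
  have hid : Nat.Partrec fun n => Part.some n :=
    Nat.Partrec.of_primrec Nat.Primrec.id
  have hfC : (fun _ : ℕ => (Part.none : Part ℕ)) ∈ C := by
    intro φ h; exact absurd h Part.not_none_dom
  have hgC := ComputablePred.rice C h2 Nat.Partrec.none hid hfC
  exact falseSent_not_true (hgC falseSent trivial)
end

section
/- The complement of the diagonal halting set, {n : ℕ | ¬ (φ_n n).Dom}, many-one reduces (in the sense of Mathlib's ManyOneReducible, ≤₀) to the set C := {n : ℕ | the set of ring sentences {φ | encode φ ∈ W_n} is satisfiable}. -/
open FirstOrder Language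

/-!
Uniformly in `n`, let `W_{f n}` be `{⌜⊥⌝}` if `φ_n(n)` halts and `∅` otherwise. The corresponding
theory is then `{⊥}` or `∅`, which is satisfiable exactly when `φ_n(n)` diverges.
-/

open Nat.Partrec (Code)

theorem Partrec.ite_none {α σ : Type*} [Primcodable α] [Primcodable σ] {p : α → Prop}
    [DecidablePred p] (hp : PrimrecPred p) {f : α →. σ} (hf : Partrec f) :
    Partrec fun a => if p a then f a else Part.none := by
  have hguard :
      Partrec fun a => ((if p a then Option.some () else Option.none : Option Unit) : Part Unit) :=
    Computable.ofOption (Primrec.ite hp (Primrec.const _) (Primrec.const _)).to_comp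
  refine (hguard.bind (hf.comp Computable.fst).to₂).of_eq fun a => ?_
  split_ifs <;> simp

/-- s-m-n theorem for `W`. -/
theorem exists_computable_mem_W_iff {h : ℕ → ℕ →. ℕ} (hh : Partrec₂ h) :
    ∃ f : ℕ → ℕ, Computable f ∧ ∀ n x, x ∈ W (f n) ↔ (h n x).Dom := by
  have hnat : Nat.Partrec fun p => h p.unpair.1 p.unpair.2 :=
    Partrec.nat_iff.mp (hh.comp (Computable.fst.comp Computable.unpair)
      (Computable.snd.comp Computable.unpair))
  obtain ⟨c, hc⟩ := Code.exists_code.mp hnat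
  refine ⟨fun n => Encodable.encode (c.curry n),
    (Primrec.encode.comp (Code.primrec₂_curry.comp (Primrec.const c) Primrec.id)).to_comp,
    fun n x => ?_⟩
  simp [W, Code.eval_curry, hc]

theorem Theory.isSatisfiable_iff_bot_notMem {L : Language} {T : L.Theory} (hT : T ⊆ {⊥}) :
    T.IsSatisfiable ↔ ⊥ ∉ T := by
  refine ⟨fun ⟨M⟩ hbot => Sentence.not_realize_bot (M := M) (M.is_model.realize_of_mem _ hbot),
    fun hbot => ?_⟩
  have hempty : T = ∅ := Set.subset_empty_iff.mp fun φ hφ => hbot (hT hφ ▸ hφ)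
  exact hempty ▸ Theory.isSatisfiable_empty L

/-- The complement of the diagonal halting set many-one reduces to
`C = {n | Th(M n) is satisfiable}`. -/
theorem stmt_5 :
    (fun n : ℕ => ¬ ((Denumerable.ofNat Nat.Partrec.Code n).eval n).Dom) ≤₀
      (fun n : ℕ => (ThM n).IsSatisfiable) := by
  let halts n := ((Denumerable.ofNat Code n).eval n).Dom
  obtain ⟨f, hf, hW⟩ := exists_computable_mem_W_iff (h := fun n x =>
      if x = Encodable.encode (⊥ : Language.ring.Sentence) then
        (Denumerable.ofNat Code n).eval n else Part.none)
    (Partrec.ite_none (Primrec.eq.comp Primrec.snd (Primrec.const _))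
      (Code.eval_part.comp ((Computable.ofNat Code).comp Computable.fst) Computable.fst))
  have hThM : ∀ n, ThM (f n) = {φ | φ = ⊥ ∧ halts n} := fun n => by
    ext φ
    rw [ThM, Set.mem_ofPred_eq, hW]
    split_ifs with hφ
    · simp [Encodable.encode_injective hφ, halts]
    · simp [mt (congrArg Encodable.encode) hφ]
  refine ⟨f, hf, fun n => ?_⟩
  show ¬halts n ↔ (ThM (f n)).IsSatisfiable
  rw [Theory.isSatisfiable_iff_bot_notMem (by rw [hThM]; exact fun φ hφ => hφ.1), hThM]
  simp [halts]
end

section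
/- The set of natural numbers inside the integers, {z : ℤ | 0 ≤ z} (equivalently Set.range ((↑) : ℕ → ℤ)), is definable without parameters in the ring language over ℤ, i.e. Set.Definable (∅ : Set ℤ) FirstOrder.Language.ring {z : ℤ | 0 ≤ z} (for instance, by Lagrange's four-square theorem, via the formula ∃y₁∃y₂∃y₃∃y₄ (x = y₁² + y₂² + y₃² + y₄²)). -/
open FirstOrder Language

attribute [local instance] FirstOrder.Ring.compatibleRingOfRing

/-- The set of natural numbers inside the integers (the nonnegative integers) is
definable without parameters in the language of rings over `ℤ` (e.g. by Lagrange's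
four-square theorem). -/
theorem stmt_8 :
    Set.Definable₁ (∅ : Set ℤ) Language.ring {z : ℤ | 0 ≤ z} := by
  rw [Set.Definable₁, Set.empty_definable_iff]
  refine ⟨(BoundedFormula.ex <| BoundedFormula.ex <| BoundedFormula.ex <| BoundedFormula.ex <|
    Term.bdEqual (Term.var (Sum.inl 0))
      ((Term.var (Sum.inr 0) * Term.var (Sum.inr 0) +
        Term.var (Sum.inr 1) * Term.var (Sum.inr 1) +
        Term.var (Sum.inr 2) * Term.var (Sum.inr 2) +
        Term.var (Sum.inr 3) * Term.var (Sum.inr 3) : Language.ring.Term _))), ?_⟩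
  ext v
  simp only [Set.mem_setOf_eq, Formula.Realize, BoundedFormula.realize_ex,
    BoundedFormula.realize_bdEqual, Ring.realize_add, Ring.realize_mul, Term.realize_var]
  constructor
  · rintro h
    obtain ⟨n, hn⟩ := Int.eq_ofNat_of_zero_le h
    obtain ⟨a, b, c, d, habcd⟩ := Nat.sum_four_squares n
    refine ⟨a, b, c, d, ?_⟩
    simp [Fin.snoc, show Fin.val (3 : Fin (0+1+1+1+1)) = 3 from rfl]
    rw [hn, ← habcd]
    push_cast
    ring
  · rintro ⟨a, b, c, d, h⟩
    simp [Fin.snoc, show Fin.val (3 : Fin (0+1+1+1+1)) = 3 from rfl] at h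
    rw [h]
    exact add_nonneg (add_nonneg (add_nonneg (mul_self_nonneg _) (mul_self_nonneg _))
      (mul_self_nonneg _)) (mul_self_nonneg _)
end
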